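/- Real induction principle: Let P be a subset of ℝ that is closed (as a topological subset of ℝ), and let a be a real number. Suppose a ∈ P, and for every c ≥ a with c ∈ P there exists ε > 0 such that every y with c ≤ y ≤ c + ε satisfies y ∈ P. Then every x ≥ a satisfies x ∈ P. -/

import Mathlib

open Set Filter Topology

theorem mem_nhdsGT_of_Icc_subset {α : Type*} [TopologicalSpace α] [LinearOrder α]
    [OrderTopology α] {s : Set α} {c d : α} (hcd : c < d) (hs : Icc c d ⊆ s) : s ∈ 𝓝[>] c :=
  mem_of_superset (Ioo_mem_nhdsGT hcd) (Ioo_subset_Icc_self.trans hs)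

theorem real_induction (P : Set ℝ) (hP : IsClosed P) (a : ℝ) (ha : a ∈ P)
    (hered : ∀ c ≥ a, c ∈ P → ∃ ε > 0, ∀ y, c ≤ y → y ≤ c + ε → y ∈ P) :
    ∀ x ≥ a, x ∈ P := by
  intro x hx
  have hgt : ∀ c ∈ P ∩ Ico a x, P ∈ 𝓝[>] c := fun c ⟨hcP, hac, _⟩ => by
    obtain ⟨ε, hε, hstep⟩ := hered c hac hcP
    exact mem_nhdsGT_of_Icc_subset (lt_add_of_pos_right c hε) fun y hy => hstep y hy.1 hy.2
  exact (hP.inter isClosed_Icc).Icc_subset_of_forall_mem_nhdsWithin ha hgt ⟨hx, le_rfl⟩
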